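/- arXiv:0910.0702 — 5 statements merged into one kernel-verified Lean document; each statement's English description precedes it below -/
import Mathlib

section
/- Let T be the L×L tridiagonal Toeplitz matrix with diagonal entries −s, superdiagonal entries λ, and subdiagonal entries μ, where λ, μ ∈ ℂ \ {0} and the polynomial p(r) = λ r² − s r + μ has distinct roots r₁, r₂ with r₁^{L+1} ≠ r₂^{L+1}. Then T is invertible and for i ≤ j the (i,j) entry of T⁻¹ equals −(r₁^i − r₂^i)(r₁^{L+1−j} − r₂^{L+1−j}) / (λ (r₁ − r₂)(r₁^{L+1} − r₂^{L+1})), while for j ≤ i it equals (r₁^{−j} − r₂^{−j})(r₁^{L+1} r₂^i − r₂^{L+1} r₁^i) / (λ (r₁ − r₂)(r₁^{L+1} − r₂^{L+1})). -/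
/-!
Write `x m` (`m = 0, …, L + 1`) for column `j` of the inverse, padded by `x 0 = x (L + 1) = 0`;
then `μ x (m - 1) - s x m + λ x (m + 1) = δ m j` for `1 ≤ m ≤ L`. Since `r₁, r₂` are the roots
of `λ r² - s r + μ`, every `a r₁ ^ m + b r₂ ^ m` solves the homogeneous recurrence. The paper's
formula for `i ≤ j` is the solution vanishing at `0`, the one for `j ≤ i` the solution vanishing
at `L + 1`; the two agree at `m = j`, and their difference at `m = j + 1` is `1 / λ`, which is
exactly the jump that produces the `δ` in row `j`.
-/

open Finset

section Tridiagonal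

variable {R : Type*} [Semiring R]

theorem sum_tridiagonal_mul {L : ℕ} (a c d : R) (g : ℕ → R) (hg₀ : g 0 = 0)
    (hg : g (L + 1) = 0) (i : Fin L) :
    ∑ j : Fin L, (if i = j then a else if (j : ℕ) = i + 1 then c
      else if (i : ℕ) = j + 1 then d else 0) * g (j + 1) =
      d * g i + a * g (i + 1) + c * g (i + 2) := by
  have hsplit : ∀ j : Fin L, (if i = j then a else if (j : ℕ) = i + 1 then c
      else if (i : ℕ) = j + 1 then d else 0) =
      (if (j : ℕ) = i then a else 0) + (if (j : ℕ) = i + 1 then c else 0) +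
        (if (j : ℕ) + 1 = i then d else 0) := by
    intro j
    simp only [Fin.ext_iff]
    split_ifs <;> first | (exfalso; omega) | simp
  simp only [hsplit, add_mul, sum_add_distrib]
  rw [Fin.sum_univ_eq_sum_range (fun j => (if j = (i : ℕ) then a else 0) * g (j + 1)),
    Fin.sum_univ_eq_sum_range (fun j => (if j = (i : ℕ) + 1 then c else 0) * g (j + 1)),
    Fin.sum_univ_eq_sum_range (fun j => (if j + 1 = (i : ℕ) then d else 0) * g (j + 1))]
  simp only [ite_mul, zero_mul, sum_ite_eq', mem_range, i.isLt, if_true]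
  have hsuper : (if (i : ℕ) + 1 < L then c * g (i + 1 + 1) else 0) = c * g (i + 2) := by
    split_ifs with h
    · rfl
    · rw [show (i : ℕ) + 2 = L + 1 by omega, hg, mul_zero]
  have hsub : ∑ j ∈ range L, (if j + 1 = (i : ℕ) then d * g (j + 1) else 0) = d * g i := by
    obtain ⟨_ | k, hk⟩ := i
    · simp [hg₀]
    · simp only [Nat.add_right_cancel_iff, sum_ite_eq', mem_range]
      rw [if_pos (by omega)]
  rw [hsuper, hsub]
  abel

end Tridiagonal

section Recurrence

variable {R : Type*} [CommRing R] (lam s mu : R)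

def IsRecurrenceSolution (f : ℕ → R) : Prop :=
  ∀ m, mu * f m - s * f (m + 1) + lam * f (m + 2) = 0

variable {lam s mu}

theorem isRecurrenceSolution_of_roots {r₁ r₂ : R} (h₁ : lam * r₁ ^ 2 - s * r₁ + mu = 0)
    (h₂ : lam * r₂ ^ 2 - s * r₂ + mu = 0) (a b : R) {f : ℕ → R}
    (hf : ∀ m, f m = a * r₁ ^ m + b * r₂ ^ m) : IsRecurrenceSolution lam s mu f := by
  intro m
  simp only [hf]
  linear_combination (a * r₁ ^ m) * h₁ + (b * r₂ ^ m) * h₂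

theorem IsRecurrenceSolution.piecewise_Iic {P Q : ℕ → R} (hP : IsRecurrenceSolution lam s mu P)
    (hQ : IsRecurrenceSolution lam s mu Q) {j : ℕ} (hPQ : P j = Q j)
    (hjump : lam * (Q (j + 1) - P (j + 1)) = 1) (i : ℕ) :
    mu * (Set.Iic j).piecewise P Q i - s * (Set.Iic j).piecewise P Q (i + 1) +
      lam * (Set.Iic j).piecewise P Q (i + 2) = if i + 1 = j then 1 else 0 := by
  simp only [Set.piecewise, Set.mem_Iic]
  rcases lt_trichotomy (i + 1) j with h | rfl | h
  · rw [if_pos (by omega), if_pos (by omega), if_pos (by omega), if_neg (by omega)]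
    exact hP i
  · rw [if_pos (by omega), if_pos le_rfl, if_neg (by omega), if_pos rfl]
    linear_combination hP i + hjump
  · have hi : (if i ≤ j then P i else Q i) = Q i := by
      split_ifs with hij
      · obtain rfl : i = j := by omega
        exact hPQ
      · rfl
    rw [hi, if_neg (by omega), if_neg (by omega), if_neg (by omega)]
    exact hQ i

end Recurrence

section GreenFunction

variable {K : Type*} [Field K] (L : ℕ) (lam r₁ r₂ : K)

def greenDenom : K := lam * (r₁ - r₂) * (r₁ ^ (L + 1) - r₂ ^ (L + 1))

def greenLeft (j m : ℕ) : K :=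
  -((r₁ ^ m - r₂ ^ m) * (r₁ ^ (L + 1 - j) - r₂ ^ (L + 1 - j))) / greenDenom L lam r₁ r₂

def greenRight (j m : ℕ) : K :=
  ((r₁⁻¹ ^ j - r₂⁻¹ ^ j) * (r₁ ^ (L + 1) * r₂ ^ m - r₂ ^ (L + 1) * r₁ ^ m)) /
    greenDenom L lam r₁ r₂

variable {L lam r₁ r₂}

theorem greenLeft_zero (j : ℕ) : greenLeft L lam r₁ r₂ j 0 = 0 := by
  simp [greenLeft]

theorem greenRight_L_add_one (j : ℕ) : greenRight L lam r₁ r₂ j (L + 1) = 0 := by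
  simp [greenRight, mul_comm]

theorem greenLeft_self_eq_greenRight_self (hr₁ : r₁ ≠ 0) (hr₂ : r₂ ≠ 0) {j : ℕ}
    (hj : j ≤ L) :
    greenLeft L lam r₁ r₂ j j = greenRight L lam r₁ r₂ j j := by
  obtain ⟨t, rfl⟩ := Nat.exists_eq_add_of_le hj
  rw [greenLeft, greenRight, show j + t + 1 - j = t + 1 by omega, inv_pow, inv_pow]
  congr 1
  field_simp
  ring

theorem lam_mul_greenRight_sub_greenLeft (hlam : lam ≠ 0) (hne : r₁ ≠ r₂)
    (hpow : r₁ ^ (L + 1) ≠ r₂ ^ (L + 1)) (hr₁ : r₁ ≠ 0) (hr₂ : r₂ ≠ 0) {j : ℕ}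
    (hj : j ≤ L) :
    lam * (greenRight L lam r₁ r₂ j (j + 1) - greenLeft L lam r₁ r₂ j (j + 1)) = 1 := by
  obtain ⟨t, rfl⟩ := Nat.exists_eq_add_of_le hj
  have hne' : r₁ - r₂ ≠ 0 := sub_ne_zero.mpr hne
  have hpow' : r₁ ^ (j + t + 1) - r₂ ^ (j + t + 1) ≠ 0 := sub_ne_zero.mpr hpow
  rw [greenLeft, greenRight, greenDenom, show j + t + 1 - j = t + 1 by omega, inv_pow, inv_pow]
  field_simp
  ring

variable {s mu : K}

theorem isRecurrenceSolution_greenLeft (h₁ : lam * r₁ ^ 2 - s * r₁ + mu = 0)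
    (h₂ : lam * r₂ ^ 2 - s * r₂ + mu = 0) (j : ℕ) :
    IsRecurrenceSolution lam s mu (greenLeft L lam r₁ r₂ j) :=
  isRecurrenceSolution_of_roots h₁ h₂
    (-(r₁ ^ (L + 1 - j) - r₂ ^ (L + 1 - j)) / greenDenom L lam r₁ r₂)
    ((r₁ ^ (L + 1 - j) - r₂ ^ (L + 1 - j)) / greenDenom L lam r₁ r₂)
    fun m => by rw [greenLeft]; ring

theorem isRecurrenceSolution_greenRight (h₁ : lam * r₁ ^ 2 - s * r₁ + mu = 0)
    (h₂ : lam * r₂ ^ 2 - s * r₂ + mu = 0) (j : ℕ) :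
    IsRecurrenceSolution lam s mu (greenRight L lam r₁ r₂ j) :=
  isRecurrenceSolution_of_roots h₁ h₂
    (-(r₁⁻¹ ^ j - r₂⁻¹ ^ j) * r₂ ^ (L + 1) / greenDenom L lam r₁ r₂)
    ((r₁⁻¹ ^ j - r₂⁻¹ ^ j) * r₁ ^ (L + 1) / greenDenom L lam r₁ r₂)
    fun m => by rw [greenRight]; ring

end GreenFunction

section GreenMatrix

variable {K : Type*} [Field K] {L : ℕ} {lam r₁ r₂ : K}

variable (L lam r₁ r₂) in
/-- Column `j` of the inverse (rows and columns counted from `1`), extended to all `m : ℕ`. -/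
def green (j : ℕ) : ℕ → K :=
  (Set.Iic j).piecewise (greenLeft L lam r₁ r₂ j) (greenRight L lam r₁ r₂ j)

theorem green_of_le {j m : ℕ} (h : m ≤ j) :
    green L lam r₁ r₂ j m = greenLeft L lam r₁ r₂ j m :=
  Set.piecewise_eq_of_mem _ _ _ h

theorem green_of_ge (hr₁ : r₁ ≠ 0) (hr₂ : r₂ ≠ 0) {j m : ℕ} (hj : j ≤ L) (h : j ≤ m) :
    green L lam r₁ r₂ j m = greenRight L lam r₁ r₂ j m := by
  rcases h.eq_or_lt with rfl | h
  · rw [green_of_le le_rfl, greenLeft_self_eq_greenRight_self hr₁ hr₂ hj]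
  · exact Set.piecewise_eq_of_notMem _ _ _ (Set.notMem_Iic.mpr h)

variable (L lam r₁ r₂) in
def greenMatrix : Matrix (Fin L) (Fin L) K :=
  Matrix.of fun i k => green L lam r₁ r₂ (k + 1) (i + 1)

theorem mul_greenMatrix_eq_one {s mu : K} (h₁ : lam * r₁ ^ 2 - s * r₁ + mu = 0)
    (h₂ : lam * r₂ ^ 2 - s * r₂ + mu = 0) (hlam : lam ≠ 0) (hne : r₁ ≠ r₂)
    (hpow : r₁ ^ (L + 1) ≠ r₂ ^ (L + 1)) (hr₁ : r₁ ≠ 0) (hr₂ : r₂ ≠ 0)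
    {T : Matrix (Fin L) (Fin L) K}
    (hT : ∀ i j : Fin L, T i j =
      if i = j then -s
      else if (j : ℕ) = (i : ℕ) + 1 then lam
      else if (i : ℕ) = (j : ℕ) + 1 then mu else 0) :
    T * greenMatrix L lam r₁ r₂ = 1 := by
  ext i k
  have hk : (k : ℕ) + 1 ≤ L := k.isLt
  have hjump := lam_mul_greenRight_sub_greenLeft hlam hne hpow hr₁ hr₂ hk
  have hcol := (isRecurrenceSolution_greenLeft h₁ h₂ _).piecewise_Iic
    (isRecurrenceSolution_greenRight h₁ h₂ _) (greenLeft_self_eq_greenRight_self hr₁ hr₂ hk)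
    hjump i
  rw [Matrix.mul_apply, Matrix.one_apply]
  simp only [hT, greenMatrix, Matrix.of_apply]
  rw [sum_tridiagonal_mul (g := green L lam r₁ r₂ (k + 1)) _ _ _
    (by rw [green_of_le (Nat.zero_le _), greenLeft_zero])
    (by rw [green_of_ge hr₁ hr₂ hk (by omega), greenRight_L_add_one]),
    neg_mul, ← sub_eq_add_neg, green, hcol]
  simp [Fin.ext_iff]

end GreenMatrix

/-- Entries are indexed `0, …, L - 1` here, corresponding to `1, …, L` in the paper. -/
theorem stmt3 (L : ℕ) (lam mu s r₁ r₂ : ℂ) (hlam : lam ≠ 0) (hmu : mu ≠ 0)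
    (h₁ : lam * r₁ ^ 2 - s * r₁ + mu = 0) (h₂ : lam * r₂ ^ 2 - s * r₂ + mu = 0)
    (hne : r₁ ≠ r₂) (hpow : r₁ ^ (L + 1) ≠ r₂ ^ (L + 1))
    (T : Matrix (Fin L) (Fin L) ℂ)
    (hT : ∀ i j : Fin L, T i j =
      if i = j then -s
      else if (j : ℕ) = (i : ℕ) + 1 then lam
      else if (i : ℕ) = (j : ℕ) + 1 then mu else 0) :
    IsUnit T ∧ ∀ i j : Fin L,
      (((i : ℕ) ≤ (j : ℕ)) → T⁻¹ i j =
        -((r₁ ^ ((i : ℕ) + 1) - r₂ ^ ((i : ℕ) + 1)) *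
            (r₁ ^ (L - (j : ℕ)) - r₂ ^ (L - (j : ℕ)))) /
          (lam * (r₁ - r₂) * (r₁ ^ (L + 1) - r₂ ^ (L + 1)))) ∧
      (((j : ℕ) ≤ (i : ℕ)) → T⁻¹ i j =
        ((r₁⁻¹ ^ ((j : ℕ) + 1) - r₂⁻¹ ^ ((j : ℕ) + 1)) *
            (r₁ ^ (L + 1) * r₂ ^ ((i : ℕ) + 1) - r₂ ^ (L + 1) * r₁ ^ ((i : ℕ) + 1))) /
          (lam * (r₁ - r₂) * (r₁ ^ (L + 1) - r₂ ^ (L + 1)))) := by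
  have hr₁ : r₁ ≠ 0 := by rintro rfl; exact hmu (by simpa using h₁)
  have hr₂ : r₂ ≠ 0 := by rintro rfl; exact hmu (by simpa using h₂)
  have hTB := mul_greenMatrix_eq_one h₁ h₂ hlam hne hpow hr₁ hr₂ hT
  refine ⟨IsUnit.of_mul_eq_one _ hTB, fun i j => ⟨fun hij => ?_, fun hji => ?_⟩⟩
  · rw [Matrix.inv_eq_right_inv hTB, greenMatrix, Matrix.of_apply, green_of_le (by omega),
      greenLeft, Nat.add_sub_add_right]
    rfl
  · rw [Matrix.inv_eq_right_inv hTB, greenMatrix, Matrix.of_apply,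
      green_of_ge hr₁ hr₂ j.isLt (by omega)]
    rfl
end

section
/- Define integers c^n(i,j) for n ≥ 1, i ≥ 1, j ≥ 1 by: c^1(1,j) = 1 for all j ≥ 1; c^1(i,j) = 1 for i ≥ 2 and j ≥ i − 1; c^1(i,j) = 0 for i ≥ 2 and j < i − 1; and for n ≥ 2, c^n(i,j) = Σ_{l=1}^{j+1} c^{n−1}(i,l). Then for n ≥ 2 and j ≥ 1: c^n(1,j) = C(2n+j−2, n−1) − C(2n+j−2, n+j). -/
/-- Path-counting coefficients c^n(i,j) of the k-limited polling analysis (L → ∞ regime):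
c¹(1,j) = 1 for all j; for i ≥ 2, c¹(i,j) = 1 iff j ≥ i−1;
and cⁿ(i,j) = Σ_{l=1}^{j+1} c^{n−1}(i,l) for n ≥ 2. -/
def pathCount : ℕ → ℕ → ℕ → ℕ
  | 0, _, _ => 0
  | 1, i, j => if i - 1 ≤ j then 1 else 0
  | n + 2, i, j => ∑ l ∈ Finset.Icc 1 (j + 1), pathCount (n + 1) i l

lemma choose_symm' (a b c : ℕ) (h : b + c = a) : a.choose b = a.choose c := by
  have hc : c ≤ a := by omega
  have hb : a - c = b := by omega
  rw [← hb, Nat.choose_symm hc]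

lemma diff_step (a b : ℕ) :
    ((a+1).choose (b+2) : ℤ) - ((a+1).choose (b+1) : ℤ)
      = ((a.choose (b+2) : ℤ) - (a.choose b : ℤ)) := by
  rw [Nat.choose_succ_succ a (b+1), Nat.choose_succ_succ a b]
  push_cast
  ring

lemma sum_helper (m k : ℕ) :
    ∑ l ∈ Finset.range (k+1),
        (((2*m+l+3).choose (m+1) : ℤ) - ((2*m+l+3).choose m : ℤ))
      = ((2*m+k+4).choose (m+2) : ℤ) - ((2*m+k+4).choose (m+1) : ℤ) := by
  induction k with
  | zero =>
    rw [Finset.sum_range_succ, Finset.sum_range_zero,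
      show 2*m+0+4 = (2*m+3)+1 by ring, diff_step (2*m+3) m,
      choose_symm' (2*m+3) (m+2) (m+1) (by ring),
      show 2*m+0+3 = 2*m+3 by ring]
    ring
  | succ k ih =>
    rw [Finset.sum_range_succ, ih,
      show 2*m+(k+1)+4 = (2*m+k+4)+1 by ring, diff_step (2*m+k+4) m,
      show 2*m+(k+1)+3 = 2*m+k+4 by ring]
    ring

lemma icc_sum (f : ℕ → ℕ) (k : ℕ) :
    ∑ l ∈ Finset.Icc 1 (k+1), f l = ∑ l ∈ Finset.range (k+1), f (l+1) := by
  induction k with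
  | zero => simp
  | succ k ih =>
    rw [show k+1+1 = (k+1)+1 from rfl, Finset.sum_Icc_succ_top (by omega), ih,
      Finset.sum_range_succ (fun l => f (l+1)) (k+1)]

lemma pathCount_main (m k : ℕ) :
    (pathCount (m+2) 1 (k+1) : ℤ)
      = ((2*m+k+3).choose (m+1) : ℤ) - ((2*m+k+3).choose (m+k+3) : ℤ) := by
  induction m generalizing k with
  | zero =>
    have hval : pathCount 2 1 (k+1) = k + 2 := by
      show (∑ l ∈ Finset.Icc 1 (k+1+1), pathCount 1 1 l) = k + 2
      have h1 : ∀ l ∈ Finset.Icc 1 (k+2), pathCount 1 1 l = 1 := by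
        intro l hl
        simp [pathCount]
      rw [Finset.sum_congr rfl h1, Finset.sum_const, Nat.card_Icc]
      simp
    rw [hval]
    have e : 2*0+k+3 = k+3 := by ring
    rw [e, Nat.choose_one_right, Nat.choose_self]
    push_cast
    ring
  | succ m ih =>
    have hstep : pathCount (m+3) 1 (k+1)
        = ∑ l ∈ Finset.Icc 1 (k+2), pathCount (m+2) 1 l := rfl
    have hrange : ∑ l ∈ Finset.Icc 1 (k+2), pathCount (m+2) 1 l
        = ∑ l ∈ Finset.range (k+2), pathCount (m+2) 1 (l+1) :=
      icc_sum (fun l => pathCount (m+2) 1 l) (k+1)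
    have hcast : (pathCount (m+3) 1 (k+1) : ℤ)
        = ∑ l ∈ Finset.range (k+2), (pathCount (m+2) 1 (l+1) : ℤ) := by
      rw [hstep, hrange]; push_cast; rfl
    rw [show m+1+2 = m+3 by ring, hcast]
    have hterm : ∀ l ∈ Finset.range (k+2),
        (pathCount (m+2) 1 (l+1) : ℤ)
          = ((2*m+l+3).choose (m+1) : ℤ) - ((2*m+l+3).choose m : ℤ) := by
      intro l _
      rw [ih l, choose_symm' (2*m+l+3) (m+l+3) m (by ring)]
    rw [Finset.sum_congr rfl hterm]
    have hs : ∑ l ∈ Finset.range (k+2),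
        (((2*m+l+3).choose (m+1) : ℤ) - ((2*m+l+3).choose m : ℤ))
        = ((2*m+k+5).choose (m+2) : ℤ) - ((2*m+k+5).choose (m+1) : ℤ) := by
      have := sum_helper m (k+1)
      rw [show k+1+1 = k+2 from rfl, show 2*m+(k+1)+4 = 2*m+k+5 by ring] at this
      exact this
    rw [hs, show 2*(m+1)+k+3 = 2*m+k+5 by ring,
      choose_symm' (2*m+k+5) (m+1+k+3) (m+1) (by ring)]

/-- for n ≥ 2 and j ≥ 1, c^n(1,j) = C(2n+j−2, n−1) − C(2n+j−2, n+j). -/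
theorem stmt7 (n j : ℕ) (hn : 2 ≤ n) (hj : 1 ≤ j) :
    (pathCount n 1 j : ℤ) =
      ((2 * n + j - 2).choose (n - 1) : ℤ) - ((2 * n + j - 2).choose (n + j) : ℤ) := by
  obtain ⟨m, rfl⟩ : ∃ m, n = m + 2 := ⟨n - 2, by omega⟩
  obtain ⟨k, rfl⟩ : ∃ k, j = k + 1 := ⟨j - 1, by omega⟩
  have e1 : 2 * (m+2) + (k+1) - 2 = 2*m+k+3 := by omega
  have e2 : m + 2 - 1 = m + 1 := by omega
  have e3 : (m+2) + (k+1) = m+k+3 := by ring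
  rw [e1, e2, e3]
  exact pathCount_main m k
end

section
/- With c^n(i,j) defined by c^1(1,j) = 1 (j ≥ 1), c^1(i,j) = 1 for i ≥ 2 and j ≥ i−1, c^1(i,j) = 0 for i ≥ 2 and j < i−1, and c^n(i,j) = Σ_{l=1}^{j+1} c^{n−1}(i,l) for n ≥ 2: for all n ≥ 2, 2 ≤ i ≤ n−1, and j ≥ 1, c^n(i,j) = C(2n+j−i−1, n−1) − C(2n+j−i−1, n+j). -/
lemma pathCount_vanish : ∀ n i j, n + j < i → pathCount n i j = 0 := by
  intro n
  induction n with
  | zero => intro i j _; rfl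
  | succ m ih =>
    match m with
    | 0 =>
      intro i j h
      simp only [pathCount]
      rw [if_neg]; omega
    | m + 1 =>
      intro i j h
      simp only [pathCount]
      apply Finset.sum_eq_zero
      intro l hl
      simp only [Finset.mem_Icc] at hl
      exact ih i l (by omega)

lemma pathCount_rec (n i j : ℕ) :
    pathCount (n + 2) i (j + 1) = pathCount (n + 2) i j + pathCount (n + 1) i (j + 2) := by
  simp only [pathCount]
  rw [show j + 1 + 1 = (j + 1) + 1 from rfl, Finset.sum_Icc_succ_top (by omega)]

lemma pathCount_zero (n i : ℕ) : pathCount (n + 2) i 0 = pathCount (n + 1) i 1 := by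
  simp [pathCount]

lemma key : ∀ n i j, 1 ≤ i → i ≤ (n + 1) + j →
    (pathCount (n + 1) i j : ℤ) =
      ((2 * (n + 1) + j - i - 1).choose n : ℤ) - ((2 * (n + 1) + j - i - 1).choose (n + 1 + j) : ℤ) := by
  intro n
  induction n with
  | zero =>
    intro i j hi hij
    simp only [pathCount]
    rw [if_pos (by omega)]
    rw [Nat.choose_zero_right, Nat.choose_eq_zero_of_lt (by omega)]
    norm_num
  | succ m ih =>
    intro i j hi hij
    induction j with
    | zero =>
      rw [pathCount_zero, ih i 1 hi (by omega)]
      obtain ⟨d, hd⟩ := Nat.le.dest hij  -- i + d = m + 2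
      have h1 : 2 * (m + 1) + 1 - i - 1 = m + d := by omega
      have h2 : 2 * (m + 1 + 1) + 0 - i - 1 = m + d + 1 := by omega
      rw [h1, h2]
      rw [show m + 1 + 1 + 0 = (m + 1) + 1 by omega,
        show (m + d + 1).choose (m + 1) = (m + d).choose m + (m + d).choose (m + 1) from
          Nat.choose_succ_succ' (m + d) m,
        show (m + d + 1).choose ((m + 1) + 1)
            = (m + d).choose (m + 1) + (m + d).choose ((m + 1) + 1) from
          Nat.choose_succ_succ' (m + d) (m + 1)]
      push_cast
      ring
    | succ k ihk =>
      have hB := ih i (k + 2) hi (by omega)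
      have hA : (pathCount (m + 2) i k : ℤ) =
          ((2 * (m + 2) + k - i - 1).choose (m + 1) : ℤ) -
            ((2 * (m + 2) + k - i - 1).choose (m + 2 + k) : ℤ) := by
        by_cases hc : i ≤ m + 2 + k
        · exact ihk hc
        · have hi3 : i = m + k + 3 := by omega
          rw [pathCount_vanish (m + 2) i k (by omega)]
          rw [show 2 * (m + 2) + k - i - 1 = m by omega]
          rw [Nat.choose_eq_zero_of_lt (by omega), Nat.choose_eq_zero_of_lt (by omega)]
          norm_num
      rw [pathCount_rec, Nat.cast_add, hA, hB]
      obtain ⟨d, hd⟩ := Nat.le.dest hij  -- i + d = m + k + 3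
      have h1 : 2 * (m + 2) + k - i - 1 = m + d := by omega
      have h2 : 2 * (m + 1) + (k + 2) - i - 1 = m + d := by omega
      have h3 : 2 * (m + 2) + (k + 1) - i - 1 = m + d + 1 := by omega
      rw [h1, h2, h3]
      rw [show m + 2 + k = m + k + 2 by omega,
        show m + 1 + (k + 2) = (m + k + 2) + 1 by omega,
        show m + 1 + 1 + (k + 1) = (m + k + 2) + 1 by omega,
        show m + 1 = m + 1 by rfl]
      rw [show (m + d + 1).choose (m + 1)
            = (m + d).choose m + (m + d).choose (m + 1) from
          Nat.choose_succ_succ' (m + d) m,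
        show (m + d + 1).choose ((m + k + 2) + 1)
            = (m + d).choose (m + k + 2) + (m + d).choose ((m + k + 2) + 1) from
          Nat.choose_succ_succ' (m + d) (m + k + 2)]
      push_cast
      ring

/-- for n ≥ 2, 2 ≤ i ≤ n−1, j ≥ 1,
c^n(i,j) = C(2n+j−i−1, n−1) − C(2n+j−i−1, n+j). -/
theorem stmt8 (n i j : ℕ) (hn : 2 ≤ n) (hi : 2 ≤ i) (hi' : i ≤ n - 1) (hj : 1 ≤ j) :
    (pathCount n i j : ℤ) =
      ((2 * n + j - i - 1).choose (n - 1) : ℤ) - ((2 * n + j - i - 1).choose (n + j) : ℤ) := by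
  obtain ⟨m, rfl⟩ : ∃ m, n = m + 1 := ⟨n - 1, by omega⟩
  have := key m i j (by omega) (by omega)
  simpa using this
end

section
/- With c^n(i,j) as defined (c^1(1,j) = 1 for j ≥ 1; c^1(i,j) = 1 iff j ≥ i−1 for i ≥ 2; c^n(i,j) = Σ_{l=1}^{j+1} c^{n−1}(i,l) for n ≥ 2): for all n ≥ 1 and j ≥ 1, c^n(n,j) = C(n+j−1, n−1). -/
lemma pc_zero : ∀ n i j : ℕ, j + (n + 1) < i → pathCount (n + 1) i j = 0 := by
  intro n
  induction n with
  | zero =>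
    intro i j h
    simp only [pathCount]
    rw [if_neg]
    omega
  | succ n ih =>
    intro i j h
    show (∑ l ∈ Finset.Icc 1 (j + 1), pathCount (n + 1) i l) = 0
    apply Finset.sum_eq_zero
    intro l hl
    simp only [Finset.mem_Icc] at hl
    exact ih i l (by omega)

lemma pc_shift : ∀ n i j : ℕ, n + 1 ≤ i → pathCount (n + 1) (i + 1) (j + 1) = pathCount (n + 1) i j := by
  intro n
  induction n with
  | zero =>
    intro i j h
    simp only [pathCount]
    split <;> split <;> omega
  | succ n ih =>
    intro i j h
    show (∑ l ∈ Finset.Icc 1 (j + 1 + 1), pathCount (n + 1) (i + 1) l)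
        = ∑ l ∈ Finset.Icc 1 (j + 1), pathCount (n + 1) i l
    rw [← Finset.Ico_add_one_right_eq_Icc, ← Finset.Ico_add_one_right_eq_Icc, Finset.sum_Ico_eq_sum_range, Finset.sum_Ico_eq_sum_range]
    simp only [show j + 1 + 1 + 1 - 1 = j + 2 from rfl, show j + 1 + 1 - 1 = j + 1 from rfl, Nat.succ_sub_one]
    have h1 : ∀ m, pathCount (n + 1) (i + 1) (1 + m) = pathCount (n + 1) i m := by
      intro m
      rw [add_comm 1 m]
      exact ih i m (by omega)
    simp only [h1]
    rw [Finset.sum_range_succ']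
    rw [pc_zero n i 0 (by omega)]
    simp [add_comm]

lemma pc_diag : ∀ n j : ℕ, pathCount (n + 1) (n + 1) j = (n + j).choose n := by
  intro n
  induction n with
  | zero => intro j; simp [pathCount]
  | succ n ih =>
    intro j
    show (∑ l ∈ Finset.Icc 1 (j + 1), pathCount (n + 1) (n + 2) l)
        = (n + 1 + j).choose (n + 1)
    rw [← Finset.Ico_add_one_right_eq_Icc, Finset.sum_Ico_eq_sum_range]
    simp only [show j + 1 + 1 - 1 = j + 1 from rfl]
    have h1 : ∀ m, pathCount (n + 1) (n + 2) (1 + m) = (n + m).choose n := by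
      intro m
      rw [add_comm 1 m, show n + 2 = n + 1 + 1 from rfl, pc_shift n (n + 1) m le_rfl, ih m]
    simp only [h1]
    have : ∑ m ∈ Finset.range (j + 1), (n + m).choose n
        = ∑ k ∈ Finset.Icc n (n + j), k.choose n := by
      rw [← Finset.Ico_add_one_right_eq_Icc, Finset.sum_Ico_eq_sum_range,
        show n + j + 1 - n = j + 1 from by omega]
    rw [this, Nat.sum_Icc_choose, show n + 1 + j = n + j + 1 from by omega]

/-- for n ≥ 1 and j ≥ 1, c^n(n,j) = C(n+j−1, n−1). -/
theorem stmt9 (n j : ℕ) (hn : 1 ≤ n) (hj : 1 ≤ j) :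
    pathCount n n j = (n + j - 1).choose (n - 1) := by
  obtain ⟨m, rfl⟩ : ∃ m, n = m + 1 := ⟨n - 1, by omega⟩
  rw [pc_diag]
  congr 1 <;> omega
end

section
/- With c^n(i,j) as defined (c^1(1,j) = 1 for j ≥ 1; c^1(i,j) = 1 iff j ≥ i−1 for i ≥ 2; c^n(i,j) = Σ_{l=1}^{j+1} c^{n−1}(i,l) for n ≥ 2): for all n ≥ 1, i ≥ 1, and j ≥ i, c^n(i+n, j) = C(n+j−i−1, n−1); and c^n(i,j) = 0 whenever i ≥ n+2 and j ≤ i−n−1. -/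
lemma pathCount_eq_zero : ∀ n i j : ℕ, 1 ≤ n → 1 ≤ j → n + 2 ≤ i → j ≤ i - n - 1 →
    pathCount n i j = 0 := by
  intro n
  induction n with
  | zero => intro i j h; omega
  | succ n ih =>
    intro i j _ hj hi hji
    cases n with
    | zero =>
      simp only [pathCount]
      rw [if_neg (by omega)]
    | succ m =>
      show pathCount (m + 2) i j = 0
      simp only [pathCount]
      apply Finset.sum_eq_zero
      intro l hl
      rw [Finset.mem_Icc] at hl
      exact ih i l (by omega) hl.1 (by omega) (by omega)

lemma pathCount_eq_choose : ∀ n i j : ℕ, 1 ≤ n → 1 ≤ i → i ≤ j →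
    pathCount n (i + n) j = (n + j - i - 1).choose (n - 1) := by
  intro n
  induction n with
  | zero => intro i j h; omega
  | succ n ih =>
    intro i j _ hi hij
    cases n with
    | zero =>
      simp only [pathCount]
      rw [if_pos (by omega)]
      have h : 1 + j - i - 1 = j - i := by omega
      rw [h, Nat.choose_zero_right]
    | succ m =>
      show pathCount (m + 2) (i + (m + 2)) j = _
      simp only [pathCount]
      have hsub : Finset.Icc (i + 1) (j + 1) ⊆ Finset.Icc 1 (j + 1) := by
        apply Finset.Icc_subset_Icc <;> omega
      rw [← Finset.sum_subset hsub (by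
        intro l hl hl'
        rw [Finset.mem_Icc] at hl hl'
        exact pathCount_eq_zero (m + 1) (i + (m + 2)) l (by omega) (by omega)
          (by omega) (by omega))]
      have key : ∀ l ∈ Finset.Icc (i + 1) (j + 1),
          pathCount (m + 1) (i + (m + 2)) l = (m + l - i - 1).choose m := by
        intro l hl
        rw [Finset.mem_Icc] at hl
        have h1 : i + (m + 2) = (i + 1) + (m + 1) := by ring
        rw [h1]
        have := ih (i + 1) l (by omega) (by omega) hl.1
        rw [this]
        congr 1
        omega
      rw [Finset.sum_congr rfl key]
      have reindex : ∑ l ∈ Finset.Icc (i + 1) (j + 1), (m + l - i - 1).choose m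
          = ∑ t ∈ Finset.Icc m (m + j - i), t.choose m := by
        apply Finset.sum_nbij' (i := fun l => m + l - i - 1) (j := fun t => t - m + i + 1)
        · intro a ha; rw [Finset.mem_Icc] at ha ⊢; omega
        · intro a ha; rw [Finset.mem_Icc] at ha ⊢; omega
        · intro a ha; rw [Finset.mem_Icc] at ha; omega
        · intro a ha; rw [Finset.mem_Icc] at ha; omega
        · intro a ha; rfl
      rw [reindex, Nat.sum_Icc_choose]
      congr 1 <;> omega

/-- for n ≥ 1, i ≥ 1, j ≥ i, c^n(i+n, j) = C(n+j−i−1, n−1);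
and c^n(i,j) = 0 whenever i ≥ n+2 and j ≤ i−n−1. -/
theorem stmt10 :
    (∀ n i j : ℕ, 1 ≤ n → 1 ≤ i → i ≤ j →
      pathCount n (i + n) j = (n + j - i - 1).choose (n - 1)) ∧
    (∀ n i j : ℕ, 1 ≤ n → 1 ≤ j → n + 2 ≤ i → j ≤ i - n - 1 →
      pathCount n i j = 0) := by
  exact ⟨pathCount_eq_choose, pathCount_eq_zero⟩
end
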